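/- Fix n ≥ 2, k ≥ 1, and p ≥ 1. The number of pairs (x, y) ∈ G_p × G_p such that the reduced word of x has length at least k+1 with (k+1)-st letter a_1 and k-th letter not equal to a_2^{−1} (nor to a_1^{−1}, which is automatic by reducedness), and the reduced word of y has length at least k+1 with first k letters equal to the first k letters of the reduced word of x and (k+1)-st letter equal to a_2, is exactly ((n−1)/(n(2n−1)))·𝒮(k+1,p)²/𝒲(k+1). -/

import Mathlib

/-- `Gcard n p` is the number of elements of the rank-`n` free group whose reduced word
has length at most `p` (the cardinality of `G_p`). -/
noncomputable def Gcard (n p : ℕ) : ℕ :=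
  {w : FreeGroup (Fin n) | w.toWord.length ≤ p}.ncard

/-- `Scard n k p = |G_p| − |G_{k−1}|` is the number of elements of the rank-`n` free
group whose reduced word has length between `k` and `p`. -/
noncomputable def Scard (n k p : ℕ) : ℕ := Gcard n p - Gcard n (k - 1)

/-- `Wcard n k = 2n(2n−1)^{k−1}` is the number of elements of the rank-`n` free group
whose reduced word has length exactly `k` (for `k ≥ 1`). -/
def Wcard (n k : ℕ) : ℕ := 2 * n * (2 * n - 1) ^ (k - 1)

/-!
Reading off reduced words, the pairs counted are exactly `(u ++ a₁ :: s, u ++ a₂ :: t)` where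
`u` is a reduced word of length `k` whose last letter is neither `a₁⁻¹` nor `a₂⁻¹`, and
`a₁ :: s`, `a₂ :: t` are reduced words of length at most `p - k`. A reduced word can be
continued by `2n - 1` letters at each step, so there are `(2n - 2)(2n - 1)^(k - 1)` choices
for `u` and `T = ∑_{j < p - k} (2n - 1)^j` choices for each of `s` and `t`. The same count
gives `𝒮(k + 1, p) = 𝒲(k + 1) T`, and the formula is the identity
`(2n - 2)(2n - 1)^(k - 1) T² = (n - 1) / (n(2n - 1)) · (𝒲(k + 1) T)² / 𝒲(k + 1)`.
-/

open Finset

theorem Finset.card_biUnion_image_cons {β : Type*} [DecidableEq β] (B : Finset β)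
    (f : β → Finset (List β)) :
    #(B.biUnion fun b => (f b).image (b :: ·)) = ∑ b ∈ B, #(f b) := by
  rw [card_biUnion]
  · exact sum_congr rfl fun b _ => card_image_of_injective _ List.cons_injective
  · intro b _ c _ hbc
    rw [Function.onFun, Finset.disjoint_left]
    simp only [mem_image]
    rintro _ ⟨s, -, rfl⟩ ⟨t, -, h⟩
    exact hbc (List.cons_eq_cons.mp h).1.symm

theorem List.eq_take_append_cons_drop {β : Type*} {l : List β} {k : ℕ} {a : β}
    (h : l[k]? = some a) : l = l.take k ++ a :: l.drop (k + 1) := by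
  obtain ⟨hk, rfl⟩ := List.getElem?_eq_some_iff.mp h
  rw [← List.drop_eq_getElem_cons hk, List.take_append_drop]

namespace FreeGroup

variable {α : Type*}

theorem fst_eq_imp_snd_eq_iff_ne {z a : α × Bool} :
    (z.1 = a.1 → z.2 = a.2) ↔ z ≠ (a.1, !a.2) := by
  obtain ⟨z₁, z₂⟩ := z
  obtain ⟨a₁, a₂⟩ := a
  cases z₂ <;> cases a₂ <;> simp

theorem isReduced_reverse {L : List (α × Bool)} : IsReduced L.reverse ↔ IsReduced L := by
  simp only [IsReduced, List.isChain_reverse, eq_comm]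

theorem isReduced_append_cons {u t : List (α × Bool)} {a : α × Bool} :
    IsReduced (u ++ a :: t) ↔
      IsReduced u ∧ IsReduced (a :: t) ∧ ∀ z ∈ u.getLast?, z ≠ (a.1, !a.2) := by
  simp only [IsReduced, List.isChain_append, List.head?_cons, Option.mem_def,
    Option.some.injEq, forall_eq', fst_eq_imp_snd_eq_iff_ne]

theorem range_toWord [DecidableEq α] : Set.range (toWord (α := α)) = {L | IsReduced L} := by
  ext L
  refine ⟨?_, fun h => ⟨mk L, by rw [toWord_mk, h.reduce_eq]⟩⟩
  rintro ⟨x, rfl⟩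
  exact isReduced_toWord

theorem ncard_setOf_toWord [DecidableEq α] (Q : List (α × Bool) → Prop) :
    {x : FreeGroup α | Q x.toWord}.ncard = {L | IsReduced L ∧ Q L}.ncard := by
  rw [← Set.ncard_preimage_of_injective_subset_range toWord_injective
    (by rw [range_toWord]; exact fun L h => h.1)]
  congr 1
  ext x
  simp [isReduced_toWord]

theorem ncard_setOf_toWord_toWord [DecidableEq α]
    (Q : List (α × Bool) → List (α × Bool) → Prop) :
    {xy : FreeGroup α × FreeGroup α | Q xy.1.toWord xy.2.toWord}.ncard =
      {LL : List (α × Bool) × List (α × Bool) |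
        IsReduced LL.1 ∧ IsReduced LL.2 ∧ Q LL.1 LL.2}.ncard := by
  rw [← Set.ncard_preimage_of_injective_subset_range
    (toWord_injective.prodMap toWord_injective)
    (by rw [Set.range_prodMap, range_toWord]; exact fun LL h => ⟨h.1, h.2.1⟩)]
  congr 1
  ext xy
  simp [isReduced_toWord]

section

variable [Fintype α] [DecidableEq α]

def reducedTails (a : α × Bool) : ℕ → Finset (List (α × Bool))
  | 0 => {[]}
  | m + 1 => ({(a.1, !a.2)}ᶜ : Finset _).biUnion fun b => (reducedTails b m).image (b :: ·)

theorem mem_reducedTails {a : α × Bool} {m : ℕ} {t : List (α × Bool)} :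
    t ∈ reducedTails a m ↔ t.length = m ∧ IsReduced (a :: t) := by
  induction m generalizing a t with
  | zero =>
    simp only [reducedTails, mem_singleton, List.length_eq_zero_iff, iff_self_and]
    rintro rfl
    exact .singleton
  | succ m ih =>
    cases t with
    | nil => simp [reducedTails]
    | cons b t =>
      simp only [reducedTails, mem_biUnion, mem_compl, mem_singleton, mem_image, ih,
        List.cons.injEq, exists_eq_right_right, List.length_cons, Nat.add_right_cancel_iff,
        isReduced_cons_cons, eq_comm (a := a.1), eq_comm (a := a.2), fst_eq_imp_snd_eq_iff_ne]
      tauto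

theorem card_reducedTails (a : α × Bool) (m : ℕ) :
    #(reducedTails a m) = (2 * Fintype.card α - 1) ^ m := by
  induction m generalizing a with
  | zero => simp [reducedTails]
  | succ m ih =>
    rw [reducedTails, card_biUnion_image_cons, sum_congr rfl fun b _ => ih b, sum_const,
      card_compl, card_singleton, Fintype.card_prod, Fintype.card_bool, smul_eq_mul, pow_succ',
      mul_comm (Fintype.card α)]

def reducedWordsStartingIn (B : Finset (α × Bool)) (m : ℕ) : Finset (List (α × Bool)) :=
  B.biUnion fun b => (reducedTails b m).image (b :: ·)

theorem mem_reducedWordsStartingIn {B : Finset (α × Bool)} {m : ℕ} {L : List (α × Bool)} :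
    L ∈ reducedWordsStartingIn B m ↔ L.length = m + 1 ∧ IsReduced L ∧ ∀ b ∈ L.head?, b ∈ B := by
  cases L with
  | nil => simp [reducedWordsStartingIn]
  | cons b t =>
    simp only [reducedWordsStartingIn, mem_biUnion, mem_image, mem_reducedTails, List.cons.injEq,
      exists_eq_right_right, List.length_cons, Nat.add_right_cancel_iff, List.head?_cons,
      Option.mem_def, Option.some.injEq, forall_eq']
    tauto

theorem card_reducedWordsStartingIn (B : Finset (α × Bool)) (m : ℕ) :
    #(reducedWordsStartingIn B m) = #B * (2 * Fintype.card α - 1) ^ m := by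
  rw [reducedWordsStartingIn, card_biUnion_image_cons,
    sum_congr rfl fun b _ => card_reducedTails b m, sum_const, smul_eq_mul]

def reducedTailsLT (a : α × Bool) (m : ℕ) : Finset (List (α × Bool)) :=
  (range m).biUnion (reducedTails a)

theorem mem_reducedTailsLT {a : α × Bool} {m : ℕ} {t : List (α × Bool)} :
    t ∈ reducedTailsLT a m ↔ t.length < m ∧ IsReduced (a :: t) := by
  simp [reducedTailsLT, mem_reducedTails]

theorem card_reducedTailsLT (a : α × Bool) (m : ℕ) :
    #(reducedTailsLT a m) = ∑ j ∈ range m, (2 * Fintype.card α - 1) ^ j := by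
  rw [reducedTailsLT, card_biUnion]
  · exact sum_congr rfl fun j _ => card_reducedTails a j
  · intro i _ j _ hij
    rw [Function.onFun, Finset.disjoint_left]
    intro t hi hj
    rw [mem_reducedTails] at hi hj
    exact hij (hi.1.symm.trans hj.1)

theorem ncard_setOf_length_toWord_le (p : ℕ) :
    {x : FreeGroup α | x.toWord.length ≤ p}.ncard =
      1 + ∑ ℓ ∈ range p, 2 * Fintype.card α * (2 * Fintype.card α - 1) ^ ℓ := by
  have hball : {L : List (α × Bool) | IsReduced L ∧ L.length ≤ p} =
      ↑(insert [] ((range p).biUnion (reducedWordsStartingIn (α := α) univ))) := by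
    ext L
    cases L with
    | nil => simp
    | cons b t =>
      simp [mem_reducedWordsStartingIn, and_comm]
  have hdisj : (range p : Set ℕ).PairwiseDisjoint (reducedWordsStartingIn (α := α) univ) := by
    intro i _ j _ hij
    rw [Function.onFun, Finset.disjoint_left]
    intro L hi hj
    rw [mem_reducedWordsStartingIn] at hi hj
    omega
  rw [ncard_setOf_toWord (·.length ≤ p), hball, Set.ncard_coe_finset,
    card_insert_of_notMem (by simp [mem_reducedWordsStartingIn]), card_biUnion hdisj, add_comm]
  simp [card_reducedWordsStartingIn, mul_comm (Fintype.card α)]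

end

def IsBranchingPair (k p : ℕ) (a₁ a₂ : α × Bool) (x y : List (α × Bool)) : Prop :=
  x.length ≤ p ∧ y.length ≤ p ∧ k + 1 ≤ x.length ∧ x[k]? = some a₁ ∧
    x[k - 1]? ≠ some (a₂.1, !a₂.2) ∧ k + 1 ≤ y.length ∧ y.take k = x.take k ∧ y[k]? = some a₂

variable {k p : ℕ} {a₁ a₂ : α × Bool}

theorem IsBranchingPair.eq_append_cons {x y : List (α × Bool)}
    (h : IsBranchingPair k p a₁ a₂ x y) :
    x = x.take k ++ a₁ :: x.drop (k + 1) ∧ y = x.take k ++ a₂ :: y.drop (k + 1) := by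
  obtain ⟨-, -, -, hx, -, -, hxy, hy⟩ := h
  exact ⟨List.eq_take_append_cons_drop hx, hxy ▸ List.eq_take_append_cons_drop hy⟩

theorem isBranchingPair_append_cons_iff (hk : 1 ≤ k) {u s t : List (α × Bool)}
    (hu : u.length = k) :
    IsBranchingPair k p a₁ a₂ (u ++ a₁ :: s) (u ++ a₂ :: t) ↔
      s.length < p - k ∧ t.length < p - k ∧ u.getLast? ≠ some (a₂.1, !a₂.2) := by
  subst hu
  have hlast : (u ++ a₁ :: s)[u.length - 1]? = u.getLast? := by
    rw [List.getElem?_append_left (by omega), List.getLast?_eq_getElem?]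
  simp only [IsBranchingPair, hlast, List.take_left', List.length_append, List.length_cons,
    List.getElem?_append_right le_rfl, Nat.sub_self, List.getElem?_cons_zero]
  exact ⟨fun ⟨hs, ht, _, _, hlast, _⟩ => ⟨by omega, by omega, hlast⟩,
    fun ⟨hs, ht, hlast⟩ => ⟨by omega, by omega, by omega, trivial, hlast, by omega, trivial, trivial⟩⟩

variable [Fintype α] [DecidableEq α]

theorem isReduced_isBranchingPair_append_cons_iff (hk : 1 ≤ k) {u s t : List (α × Bool)}
    (hu : u.length = k) :
    (IsReduced (u ++ a₁ :: s) ∧ IsReduced (u ++ a₂ :: t) ∧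
        IsBranchingPair k p a₁ a₂ (u ++ a₁ :: s) (u ++ a₂ :: t)) ↔
      u.reverse ∈ reducedWordsStartingIn {(a₁.1, !a₁.2), (a₂.1, !a₂.2)}ᶜ (k - 1) ∧
        s ∈ reducedTailsLT a₁ (p - k) ∧ t ∈ reducedTailsLT a₂ (p - k) := by
  have hne : u ≠ [] := List.ne_nil_of_length_pos (by omega)
  rw [isReduced_append_cons, isReduced_append_cons, isBranchingPair_append_cons_iff hk hu,
    mem_reducedWordsStartingIn, mem_reducedTailsLT, mem_reducedTailsLT]
  simp only [List.length_reverse, isReduced_reverse, List.head?_reverse,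
    List.getLast?_eq_some_getLast hne, hu, Nat.sub_add_cancel hk, Option.mem_def, Option.some.injEq,
    forall_eq', mem_compl, mem_insert, mem_singleton, not_or, ne_eq]
  tauto

-- The common prefix is passed reversed, so that its last letter is the first letter of a word
-- in `reducedWordsStartingIn`.
def branchPair (a₁ a₂ : α × Bool) (v : List (α × Bool) × List (α × Bool) × List (α × Bool)) :
    List (α × Bool) × List (α × Bool) :=
  (v.1.reverse ++ a₁ :: v.2.1, v.1.reverse ++ a₂ :: v.2.2)

theorem setOf_isBranchingPair_eq_image (hk : 1 ≤ k) :
    {LL : List (α × Bool) × List (α × Bool) |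
        IsReduced LL.1 ∧ IsReduced LL.2 ∧ IsBranchingPair k p a₁ a₂ LL.1 LL.2} =
      ((reducedWordsStartingIn {(a₁.1, !a₁.2), (a₂.1, !a₂.2)}ᶜ (k - 1) ×ˢ
        reducedTailsLT a₁ (p - k) ×ˢ reducedTailsLT a₂ (p - k)).image (branchPair a₁ a₂) :
          Set _) := by
  ext ⟨x, y⟩
  simp only [Set.mem_ofPred_eq, coe_image, Set.mem_image, mem_coe, mem_product, Prod.exists,
    branchPair, Prod.mk.injEq]
  constructor
  · rintro ⟨hx, hy, hxy⟩
    obtain ⟨ex, ey⟩ := hxy.eq_append_cons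
    have hu : (x.take k).length = k := by
      have := hxy.2.2.1
      simp only [List.length_take]
      omega
    refine ⟨(x.take k).reverse, x.drop (k + 1), y.drop (k + 1), ?_,
      by rw [List.reverse_reverse, ← ex], by rw [List.reverse_reverse, ← ey]⟩
    refine (isReduced_isBranchingPair_append_cons_iff hk hu).mp ?_
    rw [← ex, ← ey]
    exact ⟨hx, hy, hxy⟩
  · rintro ⟨v, s, t, hmem, rfl, rfl⟩
    have hv : v.reverse.length = k := by
      have := (mem_reducedWordsStartingIn.mp hmem.1).1
      rw [List.length_reverse]
      omega
    refine (isReduced_isBranchingPair_append_cons_iff hk hv).mpr ?_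
    rwa [List.reverse_reverse]

theorem injOn_branchPair {m : ℕ} (B : Finset (α × Bool)) (X Y : Finset (List (α × Bool))) :
    Set.InjOn (branchPair a₁ a₂) ↑(reducedWordsStartingIn B m ×ˢ X ×ˢ Y) := by
  rintro ⟨v, s, t⟩ hv ⟨v', s', t'⟩ hv' heq
  simp only [coe_product, Set.mem_prod, mem_coe] at hv hv'
  have hlen : v.reverse.length = v'.reverse.length := by
    simp only [List.length_reverse, (mem_reducedWordsStartingIn.mp hv.1).1,
      (mem_reducedWordsStartingIn.mp hv'.1).1]
  simp only [branchPair, Prod.mk.injEq] at heq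
  obtain ⟨hx, hy⟩ := heq
  obtain ⟨hv, hs⟩ := List.append_inj hx hlen
  obtain ⟨-, ht⟩ := List.append_inj hy hlen
  rw [List.reverse_inj.mp hv, (List.cons_eq_cons.mp hs).2, (List.cons_eq_cons.mp ht).2]

theorem card_compl_pair_inv (h : a₁ ≠ a₂) :
    #({(a₁.1, !a₁.2), (a₂.1, !a₂.2)}ᶜ : Finset (α × Bool)) = 2 * Fintype.card α - 2 := by
  rw [card_compl, card_pair, Fintype.card_prod, Fintype.card_bool, mul_comm]
  contrapose! h
  simpa [Prod.ext_iff] using h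

theorem ncard_setOf_isBranchingPair (h : a₁ ≠ a₂) (hk : 1 ≤ k) :
    {LL : List (α × Bool) × List (α × Bool) |
        IsReduced LL.1 ∧ IsReduced LL.2 ∧ IsBranchingPair k p a₁ a₂ LL.1 LL.2}.ncard =
      (2 * Fintype.card α - 2) * (2 * Fintype.card α - 1) ^ (k - 1) *
        (∑ j ∈ range (p - k), (2 * Fintype.card α - 1) ^ j) ^ 2 := by
  rw [setOf_isBranchingPair_eq_image hk, Set.ncard_coe_finset,
    card_image_of_injOn (injOn_branchPair _ _ _), card_product, card_product,
    card_reducedWordsStartingIn, card_reducedTailsLT, card_reducedTailsLT, card_compl_pair_inv h]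
  ring

end FreeGroup

theorem Scard_succ_eq_Wcard_mul (n k p : ℕ) :
    Scard n (k + 1) p = Wcard n (k + 1) * ∑ j ∈ range (p - k), (2 * n - 1) ^ j := by
  simp only [Scard, Gcard, FreeGroup.ncard_setOf_length_toWord_le, Fintype.card_fin, Wcard,
    add_tsub_cancel_right]
  rcases le_or_gt k p with hkp | hpk
  · obtain ⟨d, rfl⟩ := Nat.exists_eq_add_of_le hkp
    rw [sum_range_add, ← add_assoc, add_tsub_cancel_left, add_tsub_cancel_left, mul_sum]
    exact sum_congr rfl fun j _ => by ring
  · rw [Nat.sub_eq_zero_of_le hpk.le, sum_range_zero, mul_zero]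
    exact Nat.sub_eq_zero_of_le
      (Nat.add_le_add_left (sum_le_sum_of_subset (range_mono hpk.le)) 1)

/-- Fix `n ≥ 2`, `k ≥ 1`, and `p ≥ 1`. The number of pairs `(x, y) ∈ G_p × G_p` such
that the reduced word of `x` has length at least `k+1` with `(k+1)`-st letter `a₁` and
`k`-th letter not equal to `a₂⁻¹` (nor to `a₁⁻¹`, which is automatic by reducedness),
and the reduced word of `y` has length at least `k+1` with first `k` letters equal to
the first `k` letters of the reduced word of `x` and `(k+1)`-st letter equal to `a₂`,
is exactly `((n−1)/(n(2n−1)))·𝒮(k+1,p)²/𝒲(k+1)`. -/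
theorem count_case_three (n k p : ℕ) (hn : 2 ≤ n) (hk : 1 ≤ k)
    (P : Set (FreeGroup (Fin n) × FreeGroup (Fin n)))
    (hP : P = {xy | xy.1.toWord.length ≤ p ∧ xy.2.toWord.length ≤ p ∧
      k + 1 ≤ xy.1.toWord.length ∧
      xy.1.toWord[k]? = some (⟨0, by omega⟩, true) ∧
      xy.1.toWord[k - 1]? ≠ some (⟨1, by omega⟩, false) ∧
      k + 1 ≤ xy.2.toWord.length ∧
      xy.2.toWord.take k = xy.1.toWord.take k ∧
      xy.2.toWord[k]? = some (⟨1, by omega⟩, true)}) :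
    (P.ncard : ℝ) =
      ((n : ℝ) - 1) / ((n : ℝ) * (2 * (n : ℝ) - 1)) *
        (Scard n (k + 1) p : ℝ) ^ 2 / (Wcard n (k + 1) : ℝ) := by
  set a₁ : Fin n × Bool := (⟨0, by omega⟩, true)
  set a₂ : Fin n × Bool := (⟨1, by omega⟩, true)
  have hcount : P.ncard = (2 * n - 2) * (2 * n - 1) ^ (k - 1) *
      (∑ j ∈ range (p - k), (2 * n - 1) ^ j) ^ 2 := by
    have ha : a₁ ≠ a₂ := by simp [a₁, a₂]
    subst hP
    have := (FreeGroup.ncard_setOf_toWord_toWord (FreeGroup.IsBranchingPair k p a₁ a₂)).trans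
      (FreeGroup.ncard_setOf_isBranchingPair ha hk)
    rwa [Fintype.card_fin] at this
  obtain ⟨k, rfl⟩ := Nat.exists_eq_add_of_le' hk
  have hodd : ((2 * n - 1 : ℕ) : ℝ) = 2 * n - 1 := by rw [Nat.cast_sub (by omega)]; push_cast; ring
  have heven : ((2 * n - 2 : ℕ) : ℝ) = 2 * n - 2 := by rw [Nat.cast_sub (by omega)]; push_cast; ring
  have hn₀ : (n : ℝ) ≠ 0 := Nat.cast_ne_zero.mpr (by omega)
  have hodd₀ : (2 * n - 1 : ℝ) ≠ 0 := by
    have : (2 : ℝ) ≤ n := by exact_mod_cast hn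
    linarith
  rw [hcount, Scard_succ_eq_Wcard_mul, Wcard]
  push_cast [hodd, heven, add_tsub_cancel_right]
  field_simp
  ring
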